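/- Let t ≥ 2 be an integer, let μ ⊆ λ be partitions, and let (λ^{(0)},…,λ^{(t−1)}) and (μ^{(0)},…,μ^{(t−1)}) be the t-quotients of λ and μ. Then ω φ_t s_{λ/μ} = (−1)^{(t−1)·(|λ^{(0)}|+⋯+|λ^{(t−1)}| − |μ^{(0)}|−⋯−|μ^{(t−1)}|)} · φ_t ω s_{λ/μ}. -/

import Mathlib

open scoped BigOperators

noncomputable section

/-! ## The ring of symmetric functions and basic operators -/

/-- The ring of symmetric functions `Λ` (with coefficients in `ℚ`, so that the
half occurring in the definition of `sp_λ` is available), realised as the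
polynomial ring in the algebraically independent complete homogeneous symmetric
functions `h₁, h₂, h₃, …`; the variable `n : ℕ` stands for `h_{n+1}`. -/
abbrev SymF : Type := MvPolynomial ℕ ℚ

/-- The complete homogeneous symmetric function `h_r ∈ Λ`, with `h_0 = 1` and
`h_r = 0` for `r < 0`. -/
def hh (r : ℤ) : SymF :=
  if r < 0 then 0 else if r = 0 then 1 else MvPolynomial.X (r.toNat - 1)

/-- The algebra homomorphism `φ_t : Λ → Λ` determined by `φ_t h_r = h_{r/t}`
if `t ∣ r` and `φ_t h_r = 0` otherwise. -/
def phi (t : ℕ) : SymF →ₐ[ℚ] SymF :=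
  MvPolynomial.aeval fun n =>
    if t ∣ (n + 1) then hh (((n + 1) / t : ℕ) : ℤ) else 0

/-- The elementary symmetric function `e_r`, via the Jacobi–Trudi determinant
`e_r = s_{(1^r)} = det_{1 ≤ i,j ≤ r}(h_{1 - i + j})`. -/
def ee (r : ℕ) : SymF :=
  Matrix.det (Matrix.of fun i j : Fin r => hh (1 + (j : ℤ) - (i : ℤ)))

/-- The involution `ω : Λ → Λ`, determined by `ω h_r = e_r`. -/
def omegaSym : SymF →ₐ[ℚ] SymF :=
  MvPolynomial.aeval fun n => ee (n + 1)

/-- `(-1)^z` for an integer exponent `z`. -/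
def msign (z : ℤ) : ℤ := if Even z then 1 else -1

/-! ## Partitions -/

/-- A partition, encoded as a weakly decreasing, eventually zero function
`ℕ → ℕ` (0-indexed: `f i` is the part `λ_{i+1}`). -/
def IsPartition (f : ℕ → ℕ) : Prop :=
  Antitone f ∧ ∃ N, ∀ i, N ≤ i → f i = 0

/-- The length `l(λ)` (number of nonzero parts). -/
def plen (f : ℕ → ℕ) : ℕ := sInf {N | ∀ i, N ≤ i → f i = 0}

/-- Containment `μ ⊆ λ` of partitions. -/
def SubP (mu lam : ℕ → ℕ) : Prop := ∀ i, mu i ≤ lam i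

/-- The conjugate partition `λ'`. -/
def conjP (f : ℕ → ℕ) : ℕ → ℕ := fun j => Set.ncard {i | j < f i}

/-- The Frobenius rank `rk(λ)` (side length of the Durfee square). -/
def rk (f : ℕ → ℕ) : ℕ := Set.ncard {i | i < f i}

/-- The size `|λ|` of a partition. -/
def psize (f : ℕ → ℕ) : ℕ := ∑ i ∈ Finset.range (plen f), f i

/-- `λ` is `z`-asymmetric, i.e. `λ = (a | a + z)` in Frobenius notation, which
amounts to `λ'_i = λ_i + z` for all `1 ≤ i ≤ rk(λ)`.  `(-1)`-asymmetric
partitions are called orthogonal, `1`-asymmetric ones symplectic, and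
`0`-asymmetric ones are exactly the self-conjugate ones. -/
def ZAsymmetric (z : ℤ) (f : ℕ → ℕ) : Prop :=
  ∀ i < rk f, (conjP f i : ℤ) = (f i : ℤ) + z

/-- The one-row partition `(c)`. -/
def rowP (c : ℕ) : ℕ → ℕ := fun i => if i = 0 then c else 0

/-- `λ` is a `t`-core: no box of the Young diagram has hook length `t`
(the hook length of the box `(i,j)` is `λ_i + λ'_j - i - j + 1`, 1-indexed). -/
def IsTCore (t : ℕ) (f : ℕ → ℕ) : Prop :=
  ∀ i j, j < f i → f i + conjP f j ≠ i + j + 1 + t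

/-! ## Schur functions and universal characters via Jacobi–Trudi determinants -/

/-- The Jacobi–Trudi determinant `det_{1 ≤ i,j ≤ n}(h_{λ_i - μ_j - i + j})`. -/
def sSkewN (lam mu : ℕ → ℕ) (n : ℕ) : SymF :=
  Matrix.det (Matrix.of fun i j : Fin n =>
    hh ((lam i : ℤ) - (mu j : ℤ) - (i : ℤ) + (j : ℤ)))

open Classical in
/-- The skew Schur function `s_{λ/μ}`, defined by the Jacobi–Trudi formula
(and `0` if `μ ⊄ λ`). -/
def sSkew (lam mu : ℕ → ℕ) : SymF :=
  if SubP mu lam then sSkewN lam mu (plen lam) else 0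

/-- The Schur function `s_λ`. -/
def sFun (lam : ℕ → ℕ) : SymF := sSkew lam fun _ => 0

/-- The universal orthogonal character
`o_λ = det_{1 ≤ i,j ≤ n}(h_{λ_i - i + j} - h_{λ_i - i - j})`. -/
def oU (lam : ℕ → ℕ) : SymF :=
  Matrix.det (Matrix.of fun i j : Fin (plen lam) =>
    hh ((lam i : ℤ) - (i : ℤ) + (j : ℤ)) -
      hh ((lam i : ℤ) - (i : ℤ) - (j : ℤ) - 2))

/-- The universal symplectic character
`sp_λ = (1/2) · det_{1 ≤ i,j ≤ n}(h_{λ_i - i + j} + h_{λ_i - i - j + 2})`. -/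
def spU (lam : ℕ → ℕ) : SymF :=
  (1 / 2 : ℚ) • Matrix.det (Matrix.of fun i j : Fin (plen lam) =>
    hh ((lam i : ℤ) - (i : ℤ) + (j : ℤ)) +
      hh ((lam i : ℤ) - (i : ℤ) - (j : ℤ)))

/-- The universal odd orthogonal character
`so_λ = det_{1 ≤ i,j ≤ n}(h_{λ_i - i + j} + h_{λ_i - i - j + 1})`. -/
def soU (lam : ℕ → ℕ) : SymF :=
  Matrix.det (Matrix.of fun i j : Fin (plen lam) =>
    hh ((lam i : ℤ) - (i : ℤ) + (j : ℤ)) +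
      hh ((lam i : ℤ) - (i : ℤ) - (j : ℤ) - 1))

/-- The variant `so⁻_λ = det_{1 ≤ i,j ≤ n}(h_{λ_i - i + j} - h_{λ_i - i - j + 1})`. -/
def soMinusU (lam : ℕ → ℕ) : SymF :=
  Matrix.det (Matrix.of fun i j : Fin (plen lam) =>
    hh ((lam i : ℤ) - (i : ℤ) + (j : ℤ)) -
      hh ((lam i : ℤ) - (i : ℤ) - (j : ℤ) - 1))

/-- The rational universal character `rs_{λ,μ}` (one alphabet), via Koike's block
determinant, for weakly decreasing integer sequences `λ`, `μ` of lengths `n`, `m`. -/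
def rsN (n m : ℕ) (lam mu : ℕ → ℤ) : SymF :=
  Matrix.det (Matrix.fromBlocks
    (Matrix.of fun i j : Fin n => hh (lam i - (i : ℤ) + (j : ℤ)))
    (Matrix.of fun (i : Fin n) (j : Fin m) => hh (lam i - (i : ℤ) - (j : ℤ) - 1))
    (Matrix.of fun (i : Fin m) (j : Fin n) => hh (mu i - (i : ℤ) - (j : ℤ) - 1))
    (Matrix.of fun i j : Fin m => hh (mu i - (i : ℤ) + (j : ℤ))))

/-- `rs_{λ,μ}` for partitions `λ`, `μ`. -/
def rsP (lam mu : ℕ → ℕ) : SymF :=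
  rsN (plen lam) (plen mu) (fun i => (lam i : ℤ)) fun i => (mu i : ℤ)

/-! ## Beta sets, cores, quotients and signs -/

/-- The beta set `β(λ; N) = {λ_i + N - i : 1 ≤ i ≤ N}`. -/
def betaSet (lam : ℕ → ℕ) (N : ℕ) : Finset ℕ :=
  (Finset.range N).image fun i => lam i + (N - 1 - i)

/-- `m_r(λ; N)`: the number of elements of `β(λ; N)` congruent to `r` mod `t`. -/
def mr (t : ℕ) (lam : ℕ → ℕ) (N r : ℕ) : ℕ :=
  ((betaSet lam N).filter fun x => x % t = r).card

/-- The `r`-th component `λ^{(r)}` of the `t`-quotient of `λ` (computed, as per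
the convention of the paper, from a beta set whose size is a multiple of `t`):
writing the elements of `β(λ; N)` in residue class `r` as `ξ_k t + r` with
`ξ_1 > ⋯ > ξ_m ≥ 0`, the `k`-th part is `ξ_k - m + k`. -/
def tQuot (t : ℕ) (lam : ℕ → ℕ) (r : ℕ) : ℕ → ℕ := fun k =>
  let N := t * (plen lam + 1)
  let S := (betaSet lam N).filter fun x => x % t = r
  if k < S.card then (S.sort (· ≤ ·)).getD (S.card - 1 - k) 0 / t + (k + 1) - S.card
  else 0

/-- The `t`-core of `λ`: its `i`-th part is `ξ̃_i - N + i` where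
`ξ̃_1 > ⋯ > ξ̃_N` are the integers `k t + r`, `0 ≤ k < m_r(λ; N)`, `0 ≤ r < t`. -/
def tCore (t : ℕ) (lam : ℕ → ℕ) : ℕ → ℕ := fun i =>
  let N := t * (plen lam + 1)
  let T := (Finset.range t).biUnion fun r =>
    (Finset.range (mr t lam N r)).image fun k => k * t + r
  if i < N then (T.sort (· ≤ ·)).getD (N - 1 - i) 0 + (i + 1) - N else 0

/-- The sign of the permutation `w_t(λ; N)` sorting the beta set so that the
residues mod `t` increase and the entries within a residue class decrease,
computed as `(-1)` to the number of inversions: an inversion is a pair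
`x > y` of elements of the beta set with `x mod t > y mod t`. -/
def sgnW (t : ℕ) (lam : ℕ → ℕ) (N : ℕ) : ℤ :=
  (-1) ^ ((betaSet lam N ×ˢ betaSet lam N).filter fun p : ℕ × ℕ =>
    p.2 < p.1 ∧ p.2 % t < p.1 % t).card

/-! ## Ribbons and tileability -/

/-- The cells of the skew shape `λ/μ` (0-indexed rows and columns). -/
def SkewCells (lam mu : ℕ → ℕ) : Set (ℕ × ℕ) := {c | mu c.1 ≤ c.2 ∧ c.2 < lam c.1}

/-- Two cells are adjacent if they share an edge. -/
def CellAdj (c d : ℕ × ℕ) : Prop :=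
  (c.1 = d.1 ∧ (c.2 + 1 = d.2 ∨ d.2 + 1 = c.2)) ∨
    (c.2 = d.2 ∧ (c.1 + 1 = d.1 ∨ d.1 + 1 = c.1))

/-- A set of cells is (edge-)connected. -/
def ConnectedCells (S : Set (ℕ × ℕ)) : Prop :=
  ∀ c ∈ S, ∀ d ∈ S, Relation.ReflTransGen (fun x y => x ∈ S ∧ y ∈ S ∧ CellAdj x y) c d

/-- The set of cells contains a `2 × 2` square. -/
def Has2x2 (S : Set (ℕ × ℕ)) : Prop :=
  ∃ i j, (i, j) ∈ S ∧ (i + 1, j) ∈ S ∧ (i, j + 1) ∈ S ∧ (i + 1, j + 1) ∈ S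

/-- The skew shape `λ/μ` is a `t`-ribbon: connected, `t` cells, no `2 × 2` square. -/
def IsRibbon (t : ℕ) (lam mu : ℕ → ℕ) : Prop :=
  SubP mu lam ∧ (SkewCells lam mu).ncard = t ∧
    ConnectedCells (SkewCells lam mu) ∧ ¬Has2x2 (SkewCells lam mu)

/-- The height of a ribbon `λ/μ`: one less than the number of rows it occupies. -/
def ribbonHeight (lam mu : ℕ → ℕ) : ℕ :=
  (Prod.fst '' SkewCells lam mu).ncard - 1

/-- `ν` (as `ν 0, ν 1, …, ν k`) is a ribbon decomposition of the skew shape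
`λ/μ` into `t`-ribbons: `ν 0 = μ`, `ν k = λ`, every `ν i` is a partition, and
each `ν (i+1) / ν i` is a `t`-ribbon. -/
def IsRibbonDecomp (t : ℕ) (mu lam : ℕ → ℕ) (k : ℕ) (ν : ℕ → ℕ → ℕ) : Prop :=
  ν 0 = mu ∧ ν k = lam ∧ (∀ i ≤ k, IsPartition (ν i)) ∧
    ∀ i < k, IsRibbon t (ν (i + 1)) (ν i)

/-- The height of a ribbon decomposition: the sum of the heights of its ribbons.
The sign `sgn_t(λ/μ)` is `(-1)` to this quantity (for any decomposition). -/
def decompHeight (ν : ℕ → ℕ → ℕ) (k : ℕ) : ℕ :=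
  ∑ i ∈ Finset.range k, ribbonHeight (ν (i + 1)) (ν i)

/-- The skew shape `λ/μ` is tileable by `t`-ribbons. -/
def Tileable (t : ℕ) (mu lam : ℕ → ℕ) : Prop :=
  ∃ k ν, IsRibbonDecomp t mu lam k ν

/-! ## The signs `ε` of Ayyer–Kumari -/

/-- The exponent `ε^o_{λ;nt}`. -/
def epsO (t : ℕ) (lam : ℕ → ℕ) (n : ℕ) : ℕ :=
  (∑ r ∈ Finset.Icc ((t + 2) / 2) (t - 1), Nat.choose (mr t lam (n * t) r + 1) 2)
    + rk (tCore t lam)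
    + if 2 ∣ t then Nat.choose (n + 1) 2 + n * rk (tCore t lam) else 0

/-- The exponent `ε^sp_{λ;nt}`. -/
def epsSp (t : ℕ) (lam : ℕ → ℕ) (n : ℕ) : ℕ :=
  (∑ r ∈ Finset.Icc (t / 2) (t - 2), Nat.choose (mr t lam (n * t) r + 1) 2)
    + if 2 ∣ t then Nat.choose (n + 1) 2 + n * rk (tCore t lam) else 0

/-- The exponent `ε^so_{λ;nt}`. -/
def epsSo (t : ℕ) (lam : ℕ → ℕ) (n : ℕ) : ℕ :=
  (∑ r ∈ Finset.Icc ((t + 1) / 2) (t - 1), Nat.choose (mr t lam (n * t) r + 1) 2)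
    + if 2 ∣ t then 0 else n * rk (tCore t lam)

/-! ## Evaluation at a finite complex alphabet -/

/-- The complete homogeneous polynomial `h_r(y₁,…,y_N)` evaluated at complex
numbers: the sum over all multisets of size `r` of the product of the values. -/
def hEval {N : ℕ} (y : Fin N → ℂ) (r : ℕ) : ℂ :=
  ∑ m ∈ (Finset.univ : Finset (Fin N)).sym r, (Multiset.map y (m : Multiset (Fin N))).prod

/-- Evaluation of a universal symmetric function at the finite alphabet
`y₁, …, y_N` (substituting `h_r ↦ h_r(y)`). -/
def evalSym {N : ℕ} (y : Fin N → ℂ) : SymF →ₐ[ℚ] ℂ :=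
  MvPolynomial.aeval fun n => hEval y (n + 1)

/-- The Schur polynomial `s_λ(y₁,…,y_N)` (equal to the ratio of alternants when
the `y_i` are distinct, and `0` when `l(λ) > N`). -/
def schurC {N : ℕ} (lam : ℕ → ℕ) (y : Fin N → ℂ) : ℂ := evalSym y (sFun lam)

/-- The algebra homomorphism `φ_t^q : Λ → Λ[q]` with
`φ_t^q h_{at+b} = q^b ∑_{k ≥ 0} q^{kt} h_{a-k}` for `a ≥ 0`, `0 ≤ b ≤ t-1`
(the sum is finite since `h_{a-k} = 0` for `k > a`). -/
def phiQ (t : ℕ) : SymF →ₐ[ℚ] Polynomial SymF :=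
  MvPolynomial.aeval fun m =>
    ∑ k ∈ Finset.range ((m + 1) / t + 1),
      Polynomial.C (hh ((((m + 1) / t - k : ℕ)) : ℤ)) *
        Polynomial.X ^ ((m + 1) % t + k * t)

/-!
`φ_t h_n = h_{n/t}` and, by the recursion `e_{r+1} = Σ_j (-1)^j h_{j+1} e_{r-j}`,
`φ_t e_n = (-1)^{(t-1)n/t} e_{n/t}`; hence `ω φ_t = τ φ_t ω` for the sign twist
`τ h_n = (-1)^{(t-1)n} h_n`. Write `s_{λ/μ} = det(h_{a_i - b_j})` with the β-numbers
`a = β(λ; N)`, `b = β(μ; N)`, `N = t(l(λ) + 1)`. The entries of `φ_t ω` of this matrix are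
`±e_{(a_i - b_j)/t}`, and vanish unless `a_i ≡ b_j (mod t)`; on them `τ` acts by
`(-1)^{(t-1)(⌊a_i/t⌋ + ⌊b_j/t⌋)}`, so it multiplies the determinant by
`(-1)^{(t-1)(Σ⌊a_i/t⌋ + Σ⌊b_j/t⌋)}`. If the determinant is nonzero, a permutation matches the
residues of the `a_i` with those of the `b_j`, so both β-sets have the same number `m_r` of beads
on each runner of the `t`-abacus; as `Σ_k ξ_k = |λ^{(r)}| + m_r(m_r - 1)/2` on runner `r`, this
gives `Σ⌊a_i/t⌋ - Σ⌊b_j/t⌋ = Σ|λ^{(r)}| - Σ|μ^{(r)}|`.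
-/

open MvPolynomial Finset

theorem map_det_of_map_apply_eq_mul {R n F : Type*} [CommRing R] [Fintype n] [DecidableEq n]
    [FunLike F R R] [RingHomClass F R R] (f : F) (M : Matrix n n R) (u v : n → R)
    (h : ∀ i j, f (M i j) = u i * v j * M i j) :
    f M.det = (∏ i, u i) * (∏ j, v j) * M.det := by
  change (f : R →+* R) M.det = _
  have hM : (f : R →+* R).mapMatrix M =
      Matrix.of fun i j => u i * (Matrix.of fun i j => v j * M i j) i j := by
    ext i j
    simp [h, mul_assoc]
  rw [RingHom.map_det, hM, Matrix.det_mul_column, Matrix.det_mul_row, mul_assoc]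

theorem Matrix.det_succ_succ_of_apply_zero_eq_zero {R : Type*} [CommRing R] {n : ℕ}
    (A : Matrix (Fin (n + 2)) (Fin (n + 2)) R) (hA : ∀ i : Fin (n + 2), 2 ≤ (i : ℕ) → A i 0 = 0) :
    A.det = A 0 0 * (A.submatrix (Fin.succAbove 0) Fin.succ).det
      - A 1 0 * (A.submatrix (Fin.succAbove 1) Fin.succ).det := by
  rw [Matrix.det_succ_column_zero, Fin.sum_univ_succ, Fin.sum_univ_succ,
    sum_eq_zero fun i _ => by rw [hA i.succ.succ (by simp)]; ring]
  simp only [Fin.succAbove_zero, Fin.succ_zero_eq_one, Fin.val_zero, Fin.val_one, pow_zero,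
    pow_one, one_mul, neg_mul, add_zero]
  ring

theorem neg_one_pow_sub {R : Type*} [CommMonoid R] [HasDistribNeg R] {a b : ℕ} (h : b ≤ a) :
    (-1 : R) ^ (a - b) = (-1) ^ a * (-1) ^ b := by
  obtain ⟨c, rfl⟩ := Nat.exists_eq_add_of_le h
  rw [Nat.add_sub_cancel_left, pow_add, mul_comm, ← mul_assoc, ← pow_add, ← two_mul, pow_mul,
    neg_one_sq, one_pow, one_mul]

theorem sum_range_mul_eq_of_not_dvd {M : Type*} [AddCommMonoid M] {t : ℕ} (ht : 0 < t) (n : ℕ)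
    (f : ℕ → M) (hf : ∀ j, ¬t ∣ j + 1 → f j = 0) :
    ∑ j ∈ range (t * n), f j = ∑ k ∈ range n, f (k * t + (t - 1)) := by
  induction n with
  | zero => simp
  | succ n ih =>
    have hblock : ∑ x ∈ range t, f (t * n + x) = f (n * t + (t - 1)) := by
      rw [mul_comm t n]
      refine sum_eq_single (t - 1) (fun x hx hne => hf _ ?_) (by simp [ht])
      rw [mem_range] at hx
      rw [add_assoc, Nat.dvd_add_right (dvd_mul_left t n)]
      exact Nat.not_dvd_of_pos_of_lt (by omega) (by omega)
    rw [mul_add_one, sum_range_add, ih, sum_range_succ, hblock]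

theorem Nat.sub_div_of_mod_eq {a b t : ℕ} (h : a % t = b % t) : (a - b) / t = a / t - b / t := by
  rcases Nat.eq_zero_or_pos t with rfl | ht
  · simp
  calc (a - b) / t = (t * (a / t) + a % t - (t * (b / t) + b % t)) / t := by
        rw [Nat.div_add_mod, Nat.div_add_mod]
    _ = a / t - b / t := by
        rw [h, Nat.add_sub_add_right, ← Nat.mul_sub, Nat.mul_div_cancel_left _ ht]

theorem Nat.div_lt_div_of_lt_of_mod_eq {t x y : ℕ} (hxy : x < y) (hmod : x % t = y % t) :
    x / t < y / t := by
  by_contra! h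
  have := Nat.mul_le_mul_left t h
  have := Nat.div_add_mod x t
  have := Nat.div_add_mod y t
  omega

theorem sum_range_getD_sort {M : Type*} [AddCommMonoid M] (S : Finset ℕ) (f : ℕ → M) :
    ∑ j ∈ range #S, f ((S.sort (· ≤ ·)).getD j 0) = ∑ x ∈ S, f x := by
  rw [← S.length_sort (· ≤ ·), sum_range]
  simp only [Fin.is_lt, List.getD_eq_getElem, Fin.sum_univ_fun_getElem]
  rw [((S.sort_perm_toList (· ≤ ·)).map f).sum_eq, sum_map_toList]

theorem le_getD_sort_div {t r : ℕ} {S : Finset ℕ} (hS : ∀ x ∈ S, x % t = r) {j : ℕ}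
    (hj : j < #S) : j ≤ (S.sort (· ≤ ·)).getD j 0 / t := by
  induction j with
  | zero => exact Nat.zero_le _
  | succ j ih =>
    have hlen := S.length_sort (· ≤ ·)
    have hmem : ∀ k (hk : k < #S), (S.sort (· ≤ ·)).getD k 0 ∈ S := fun k hk => by
      rw [List.getD_eq_getElem _ _ (by omega), ← S.mem_sort (· ≤ ·)]
      exact List.getElem_mem _
    have hlt : (S.sort (· ≤ ·)).getD j 0 < (S.sort (· ≤ ·)).getD (j + 1) 0 := by
      rw [List.getD_eq_getElem _ _ (by omega), List.getD_eq_getElem _ _ (by omega)]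
      exact (S.sortedLT_sort).getElem_lt_getElem_iff.mpr (by omega)
    have := Nat.div_lt_div_of_lt_of_mod_eq hlt
      (by rw [hS _ (hmem j (by omega)), hS _ (hmem (j + 1) hj)])
    have := ih (by omega)
    omega

theorem disjoint_map_addRight_range (s : Finset ℕ) (t : ℕ) :
    Disjoint (s.map (addRightEmbedding t)) (range t) :=
  disjoint_left.mpr fun x hx hxt => by
    obtain ⟨y, -, rfl⟩ := mem_map.mp hx
    simp at hxt

theorem hh_of_neg {r : ℤ} (h : r < 0) : hh r = 0 := by simp [hh, h]

theorem hh_zero : hh 0 = 1 := by simp [hh]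

theorem hh_natCast_succ (m : ℕ) : hh ((m + 1 : ℕ) : ℤ) = X m := by
  simp only [hh, if_neg (by omega : ¬((m + 1 : ℕ) : ℤ) < 0),
    if_neg (by omega : ((m + 1 : ℕ) : ℤ) ≠ 0), Int.toNat_natCast, Nat.add_sub_cancel]

theorem ee_zero : ee 0 = 1 := by simp [ee]

theorem phi_hh_natCast (t m : ℕ) :
    phi t (hh m) = if t ∣ m then hh (m / t : ℕ) else 0 := by
  cases m with
  | zero => simp [hh_zero]
  | succ m => rw [hh_natCast_succ]; simp [phi]

theorem omegaSym_hh_natCast (m : ℕ) : omegaSym (hh m) = ee m := by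
  cases m with
  | zero => simp [hh_zero, ee_zero]
  | succ m => rw [hh_natCast_succ]; simp [omegaSym]

/-- The Jacobi–Trudi determinant of the hook `(c + 1, 1^(r - 1))`. -/
def hookJT (c r : ℕ) : SymF :=
  (Matrix.of fun i j : Fin r =>
    if (i : ℕ) = 0 then hh ((c : ℤ) + 1 + j) else hh (1 + (j : ℤ) - i)).det

theorem ee_eq_hookJT (r : ℕ) : ee r = hookJT 0 r := by
  unfold ee hookJT
  congr 1
  refine Matrix.ext fun i j => ?_
  by_cases hi : (i : ℕ) = 0 <;> simp [hi]

theorem hookJT_one (c : ℕ) : hookJT c 1 = hh ((c : ℤ) + 1) := by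
  simp [hookJT]

theorem hookJT_succ_succ (c r : ℕ) :
    hookJT c (r + 2) = hh ((c : ℤ) + 1) * ee (r + 1) - hookJT (c + 1) (r + 1) := by
  unfold hookJT
  rw [Matrix.det_succ_succ_of_apply_zero_eq_zero _ fun i hi => by
    simp [show i ≠ 0 by rintro rfl; simp at hi, hh_of_neg (show 1 - (i : ℤ) < 0 by omega)]]
  have hminor₀ : ((Matrix.of fun i j : Fin (r + 2) => if (i : ℕ) = 0 then hh ((c : ℤ) + 1 + j)
      else hh (1 + (j : ℤ) - i)).submatrix (Fin.succAbove 0) Fin.succ).det = ee (r + 1) := by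
    unfold ee
    congr 1
    refine Matrix.ext fun i j => ?_
    simp only [Fin.succAbove_zero, Matrix.submatrix_apply, Matrix.of_apply, Fin.val_succ,
      Nat.add_one_ne_zero, if_false]
    congr 1
    push_cast
    ring
  have hminor₁ : ((Matrix.of fun i j : Fin (r + 2) => if (i : ℕ) = 0 then hh ((c : ℤ) + 1 + j)
      else hh (1 + (j : ℤ) - i)).submatrix (Fin.succAbove 1) Fin.succ) =
      Matrix.of fun i j : Fin (r + 1) =>
        if (i : ℕ) = 0 then hh (((c + 1 : ℕ) : ℤ) + 1 + j) else hh (1 + (j : ℤ) - i) := by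
    refine Matrix.ext fun i j => ?_
    cases i using Fin.cases with
    | zero =>
      simp only [Matrix.submatrix_apply, Matrix.of_apply, Fin.succAbove_ne_zero_zero one_ne_zero,
        Fin.val_zero, if_true, Fin.val_succ]
      congr 1
      push_cast
      ring
    | succ i =>
      have hi : (1 : Fin (r + 2)).succAbove i.succ = i.succ.succ :=
        Fin.succAbove_of_le_castSucc _ _ (Fin.le_def.mpr (by simp))
      simp only [Matrix.submatrix_apply, Matrix.of_apply, hi, Fin.val_succ, Nat.add_one_ne_zero,
        if_false]
      congr 1
      push_cast
      ring
  rw [hminor₀, hminor₁]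
  simp [hh_zero]

theorem hookJT_succ (c r : ℕ) :
    hookJT c (r + 1) =
      ∑ j ∈ range (r + 1), (-1) ^ j * hh ((c + 1 + j : ℕ) : ℤ) * ee (r - j) := by
  induction r generalizing c with
  | zero => simp [hookJT_one, ee_zero]
  | succ r ih =>
    rw [hookJT_succ_succ, ih, sum_range_succ' _ (r + 1), sub_eq_add_neg, ← sum_neg_distrib]
    simp only [pow_succ, Nat.add_sub_add_right]
    push_cast
    ring_nf

theorem ee_succ (r : ℕ) :
    ee (r + 1) = ∑ j ∈ range (r + 1), (-1) ^ j * hh ((j + 1 : ℕ) : ℤ) * ee (r - j) := by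
  rw [ee_eq_hookJT, hookJT_succ]
  simp only [zero_add, add_comm 1]

theorem phi_ee {t : ℕ} (ht : 0 < t) (s : ℕ) :
    phi t (ee s) = if t ∣ s then (-1) ^ ((t - 1) * (s / t)) * ee (s / t) else 0 := by
  induction s using Nat.strong_induction_on with
  | _ s ih =>
  rcases s with _ | r
  · simp [ee_zero]
  have hterm : ∀ j ∈ range (r + 1), phi t ((-1) ^ j * hh ((j + 1 : ℕ) : ℤ) * ee (r - j)) =
      (-1) ^ j * (if t ∣ j + 1 then hh ((j + 1) / t : ℕ) else 0) *
        (if t ∣ r - j then (-1) ^ ((t - 1) * ((r - j) / t)) * ee ((r - j) / t) else 0) := by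
    intro j hj
    rw [map_mul, map_mul, map_pow, map_neg, map_one, phi_hh_natCast, ih _ (by omega)]
  rw [ee_succ, map_sum, sum_congr rfl hterm]
  split_ifs with hdvd
  · obtain ⟨n, hn⟩ := hdvd
    obtain ⟨m, rfl⟩ : ∃ m, n = m + 1 := ⟨n - 1, by rcases n with _ | n <;> simp_all⟩
    rw [hn, sum_range_mul_eq_of_not_dvd ht _ _ fun j hj => by simp [hj],
      Nat.mul_div_cancel_left _ ht, ee_succ, mul_sum]
    refine sum_congr rfl fun k hk => ?_
    obtain ⟨d, rfl⟩ : ∃ d, m = k + d := ⟨m - k, by have := mem_range.mp hk; omega⟩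
    obtain ⟨s, rfl⟩ : ∃ s, t = s + 1 := ⟨t - 1, by omega⟩
    have hj : k * (s + 1) + (s + 1 - 1) + 1 = (s + 1) * (k + 1) := by
      rw [Nat.add_sub_cancel]; ring
    have hrj : r - (k * (s + 1) + (s + 1 - 1)) = (s + 1) * d := by
      have : r + 1 = (s + 1) * (k + 1) + (s + 1) * d := by rw [hn]; ring
      omega
    rw [if_pos ⟨_, hj⟩, if_pos ⟨_, hrj⟩, hj, hrj, Nat.mul_div_cancel_left _ ht,
      Nat.mul_div_cancel_left _ ht, show k + d - k = d by omega]
    simp only [Nat.add_sub_cancel]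
    ring
  · refine sum_eq_zero fun j hj => ?_
    by_cases hj1 : t ∣ j + 1
    · have hrj : ¬t ∣ r - j := fun hrj => hdvd <| by
        simpa [show j + 1 + (r - j) = r + 1 by have := mem_range.mp hj; omega] using dvd_add hj1 hrj
      simp [hrj]
    · simp [hj1]

/-- Multiplies the homogeneous part of degree `d` by `(-1)^(s d)`. -/
def signTwist (s : ℕ) : SymF →ₐ[ℚ] SymF :=
  aeval fun n => (-1) ^ (s * (n + 1)) * X n

theorem signTwist_hh_natCast (s m : ℕ) : signTwist s (hh m) = (-1) ^ (s * m) * hh m := by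
  cases m with
  | zero => simp [hh_zero]
  | succ m => rw [hh_natCast_succ]; simp [signTwist]

theorem signTwist_ee (s m : ℕ) : signTwist s (ee m) = (-1) ^ (s * m) * ee m := by
  unfold ee
  rw [map_det_of_map_apply_eq_mul (signTwist s) _
    (fun i : Fin m => (-1) ^ (s * (i : ℕ))) (fun j : Fin m => (-1) ^ (s * (1 + (j : ℕ))))
    fun i j => ?_]
  · have hexp : s * ∑ i : Fin m, (i : ℕ) + s * ∑ j : Fin m, (1 + (j : ℕ)) =
        s * m + 2 * (s * ∑ i : Fin m, (i : ℕ)) := by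
      simp only [sum_add_distrib, sum_const, card_univ, Fintype.card_fin, smul_eq_mul, mul_one]
      ring
    rw [prod_pow_eq_pow_sum, prod_pow_eq_pow_sum, ← pow_add, ← mul_sum, ← mul_sum, hexp, pow_add,
      (even_two_mul _).neg_one_pow, mul_one]
  · by_cases hij : (i : ℕ) ≤ 1 + j
    · have hc : 1 + (j : ℤ) - i = ((1 + j - i : ℕ) : ℤ) := by omega
      simp only [Matrix.of_apply, hc, signTwist_hh_natCast, Nat.mul_sub,
        neg_one_pow_sub (Nat.mul_le_mul_left s hij)]
      ring
    · simp [hh_of_neg (show 1 + (j : ℤ) - i < 0 by omega)]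

theorem omegaSym_phi {t : ℕ} (ht : 0 < t) (f : SymF) :
    omegaSym (phi t f) = signTwist (t - 1) (phi t (omegaSym f)) := by
  suffices omegaSym.comp (phi t) = (signTwist (t - 1)).comp ((phi t).comp omegaSym) from
    congrArg (fun g : SymF →ₐ[ℚ] SymF => g f) this
  refine MvPolynomial.algHom_ext fun n => ?_
  have hn : omegaSym (X n) = ee (n + 1) := by simp [omegaSym]
  have hphi : phi t (X n) = if t ∣ n + 1 then hh ((n + 1) / t : ℕ) else 0 := by
    simp only [phi, aeval_X]
  simp only [AlgHom.comp_apply, hn, hphi, phi_ee ht]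
  split_ifs
  · rw [omegaSym_hh_natCast, map_mul, map_pow, map_neg, map_one, signTwist_ee, ← mul_assoc,
      ← pow_add, Even.neg_one_pow ⟨_, rfl⟩, one_mul]
  · simp

theorem phi_omegaSym_hh {t : ℕ} (ht : 0 < t) (a b : ℕ) :
    phi t (omegaSym (hh ((a : ℤ) - b))) =
      if b ≤ a ∧ t ∣ a - b then (-1) ^ ((t - 1) * ((a - b) / t)) * ee ((a - b) / t) else 0 := by
  by_cases hba : b ≤ a
  · rw [show (a : ℤ) - b = ((a - b : ℕ) : ℤ) by omega, omegaSym_hh_natCast, phi_ee ht]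
    simp [hba]
  · simp [hba, hh_of_neg (show (a : ℤ) - b < 0 by omega)]

theorem mod_eq_of_phi_omegaSym_hh_ne_zero {t : ℕ} (ht : 0 < t) {a b : ℕ}
    (h : phi t (omegaSym (hh ((a : ℤ) - b))) ≠ 0) : a % t = b % t := by
  rw [phi_omegaSym_hh ht] at h
  split_ifs at h with hab
  · exact ((Nat.modEq_iff_dvd' hab.1).mpr hab.2).symm
  · exact absurd rfl h

theorem card_filter_mod_eq_of_det_ne_zero {t N : ℕ} (ht : 0 < t) (a b : Fin N → ℕ)
    (h : (Matrix.of fun i j => phi t (omegaSym (hh ((a i : ℤ) - b j)))).det ≠ 0) (r : ℕ) :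
    #{i | a i % t = r} = #{i | b i % t = r} := by
  rw [Matrix.det_apply] at h
  obtain ⟨σ, -, hσ⟩ := exists_ne_zero_of_sum_ne_zero h
  have hmod : ∀ i, a (σ i) % t = b i % t := fun i =>
    mod_eq_of_phi_omegaSym_hh_ne_zero ht fun hi => hσ <| by
      rw [prod_eq_zero (mem_univ i) hi, smul_zero]
  calc #{i | a i % t = r} = #{i | a (σ i) % t = r} := card_equiv σ.symm (by simp)
    _ = #{i | b i % t = r} := by simp only [hmod]

theorem signTwist_det_phi_omegaSym {t N : ℕ} (ht : 0 < t) (a b : Fin N → ℕ) :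
    signTwist (t - 1) (Matrix.of fun i j => phi t (omegaSym (hh ((a i : ℤ) - b j)))).det =
      (-1) ^ ((t - 1) * (∑ i, a i / t + ∑ j, b j / t)) *
        (Matrix.of fun i j => phi t (omegaSym (hh ((a i : ℤ) - b j)))).det := by
  rw [map_det_of_map_apply_eq_mul (signTwist (t - 1)) _
    (fun i => (-1) ^ ((t - 1) * (a i / t))) (fun j => (-1) ^ ((t - 1) * (b j / t))) fun i j => ?_]
  · rw [prod_pow_eq_pow_sum, prod_pow_eq_pow_sum, ← pow_add, ← mul_sum, ← mul_sum, mul_add]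
  · rw [Matrix.of_apply, phi_omegaSym_hh ht]
    split_ifs with hab
    · have hq : (a i - b j) / t = a i / t - b j / t :=
        Nat.sub_div_of_mod_eq ((Nat.modEq_iff_dvd' hab.1).mpr hab.2).symm
      have hle : (t - 1) * (b j / t) ≤ (t - 1) * (a i / t) :=
        Nat.mul_le_mul_left _ (Nat.div_le_div_right hab.1)
      rw [map_mul, map_pow, map_neg, map_one, signTwist_ee, hq, Nat.mul_sub, neg_one_pow_sub hle]
    · simp

theorem IsPartition.eq_zero_of_plen_le {lam : ℕ → ℕ} (hlam : IsPartition lam) {i : ℕ}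
    (hi : plen lam ≤ i) : lam i = 0 :=
  Nat.sInf_mem hlam.2 i hi

theorem plen_le_of_subP {lam mu : ℕ → ℕ} (hlam : IsPartition lam) (hsub : SubP mu lam) :
    plen mu ≤ plen lam :=
  Nat.sInf_le fun i hi => by simpa [hlam.eq_zero_of_plen_le hi] using hsub i

theorem psize_eq_sum_range {f : ℕ → ℕ} {M : ℕ} (hM : ∀ i, M ≤ i → f i = 0) :
    psize f = ∑ i ∈ range M, f i := by
  have hle : plen f ≤ M := Nat.sInf_le hM
  have hvan : ∀ i, plen f ≤ i → f i = 0 := Nat.sInf_mem (s := {N | ∀ i, N ≤ i → f i = 0}) ⟨M, hM⟩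
  exact sum_subset (range_subset_range.mpr hle) fun i _ hi => hvan i (by simpa using hi)

theorem sSkewN_succ {lam mu : ℕ → ℕ} {n : ℕ} (hlam : lam n = 0) (hmu : mu n = 0) :
    sSkewN lam mu (n + 1) = sSkewN lam mu n := by
  unfold sSkewN
  rw [Matrix.det_succ_row _ (Fin.last n), sum_eq_single (Fin.last n)]
  · simp [hlam, hmu, hh_zero, Matrix.submatrix, Fin.succAbove_last]
  · intro j _ hj
    have hjn : (j : ℕ) < n := Fin.val_lt_last hj
    simp [hlam, hh_of_neg (show -(mu j : ℤ) - n + j < 0 by omega)]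
  · simp

theorem sSkew_eq_sSkewN {lam mu : ℕ → ℕ} (hlam : IsPartition lam) (hmu : IsPartition mu)
    (hsub : SubP mu lam) {N : ℕ} (hN : plen lam ≤ N) : sSkew lam mu = sSkewN lam mu N := by
  rw [sSkew, if_pos hsub]
  induction N, hN using Nat.le_induction with
  | base => rfl
  | succ N hN ih =>
    rw [ih, sSkewN_succ (hlam.eq_zero_of_plen_le hN)
      (hmu.eq_zero_of_plen_le ((plen_le_of_subP hlam hsub).trans hN))]

def beta (lam : ℕ → ℕ) (N : ℕ) (i : Fin N) : ℕ := lam i + (N - 1 - i)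

theorem sSkewN_eq_det_beta (lam mu : ℕ → ℕ) (N : ℕ) :
    sSkewN lam mu N = (Matrix.of fun i j : Fin N => hh ((beta lam N i : ℤ) - beta mu N j)).det := by
  unfold sSkewN beta
  congr 1
  refine Matrix.ext fun i j => ?_
  simp only [Matrix.of_apply]
  congr 1
  omega

theorem beta_injective {lam : ℕ → ℕ} (hlam : Antitone lam) (N : ℕ) :
    Function.Injective (beta lam N) := by
  intro i j hij
  have key : ∀ i j : Fin N, i < j → beta lam N j < beta lam N i := fun i j hlt => by
    have := hlam (le_of_lt (Fin.lt_def.mp hlt))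
    unfold beta
    omega
  rcases lt_trichotomy i j with h | h | h
  · exact absurd hij (key i j h).ne'
  · exact h
  · exact absurd hij (key j i h).ne

theorem betaSet_eq_image (lam : ℕ → ℕ) (N : ℕ) : betaSet lam N = univ.image (beta lam N) := by
  ext x
  simp only [betaSet, beta, mem_image, mem_range, mem_univ, true_and]
  exact ⟨fun ⟨i, hi, hx⟩ => ⟨⟨i, hi⟩, hx⟩, fun ⟨i, hx⟩ => ⟨i, i.isLt, hx⟩⟩

theorem sum_betaSet {lam : ℕ → ℕ} (hlam : Antitone lam) (N : ℕ) (f : ℕ → ℤ) :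
    ∑ x ∈ betaSet lam N, f x = ∑ i, f (beta lam N i) := by
  rw [betaSet_eq_image, sum_image fun i _ j _ h => beta_injective hlam N h]

theorem mr_eq_card {lam : ℕ → ℕ} (hlam : Antitone lam) (t N r : ℕ) :
    mr t lam N r = #{i | beta lam N i % t = r} := by
  rw [mr, betaSet_eq_image, filter_image, card_image_of_injective _ (beta_injective hlam N)]

theorem card_betaSet {lam : ℕ → ℕ} (hlam : Antitone lam) (N : ℕ) : #(betaSet lam N) = N := by
  rw [betaSet_eq_image, card_image_of_injective _ (beta_injective hlam N), card_univ,
    Fintype.card_fin]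

theorem betaSet_add {lam : ℕ → ℕ} {N : ℕ} (hvan : ∀ i, N ≤ i → lam i = 0) (t : ℕ) :
    betaSet lam (N + t) = (betaSet lam N).map (addRightEmbedding t) ∪ range t := by
  ext x
  simp only [betaSet, mem_union, mem_map, mem_image, mem_range, addRightEmbedding_apply]
  constructor
  · rintro ⟨i, hi, rfl⟩
    by_cases hiN : i < N
    · exact Or.inl ⟨_, ⟨i, hiN, rfl⟩, by omega⟩
    · exact Or.inr (by rw [hvan i (by omega)]; omega)
  · rintro (⟨_, ⟨i, hi, rfl⟩, rfl⟩ | hx)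
    · exact ⟨i, by omega, by omega⟩
    · exact ⟨N + t - 1 - x, by omega, by rw [hvan _ (by omega)]; omega⟩

theorem phi_omegaSym_sSkew {t : ℕ} {lam mu : ℕ → ℕ} (hlam : IsPartition lam)
    (hmu : IsPartition mu) (hsub : SubP mu lam) {N : ℕ} (hN : plen lam ≤ N) :
    phi t (omegaSym (sSkew lam mu)) = (Matrix.of fun i j : Fin N =>
      phi t (omegaSym (hh ((beta lam N i : ℤ) - beta mu N j)))).det := by
  rw [sSkew_eq_sSkewN hlam hmu hsub hN, sSkewN_eq_det_beta, AlgHom.map_det, AlgHom.map_det]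
  rfl

theorem psize_tQuot_add_sum_range (t : ℕ) (lam : ℕ → ℕ) (r : ℕ) :
    psize (tQuot t lam r) + ∑ k ∈ range (mr t lam (t * (plen lam + 1)) r), k =
      ∑ x ∈ (betaSet lam (t * (plen lam + 1))).filter (· % t = r), x / t := by
  set S := (betaSet lam (t * (plen lam + 1))).filter (· % t = r)
  have hS : ∀ x ∈ S, x % t = r := fun x hx => (mem_filter.mp hx).2
  have hq : ∀ k, tQuot t lam r k =
      if k < #S then (S.sort (· ≤ ·)).getD (#S - 1 - k) 0 / t + (k + 1) - #S else 0 :=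
    fun k => rfl
  have hpart : ∀ k ∈ range #S,
      tQuot t lam r k + (#S - 1 - k) = (S.sort (· ≤ ·)).getD (#S - 1 - k) 0 / t := fun k hk => by
    rw [mem_range] at hk
    have := le_getD_sort_div hS (j := #S - 1 - k) (by omega)
    rw [hq, if_pos hk]
    omega
  calc psize (tQuot t lam r) + ∑ k ∈ range (mr t lam (t * (plen lam + 1)) r), k
      = ∑ k ∈ range #S, (tQuot t lam r k + (#S - 1 - k)) := by
        rw [psize_eq_sum_range (M := #S) fun k hk => by rw [hq, if_neg (by omega)],
          sum_add_distrib, ← sum_range_reflect (fun k => k)]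
        rfl
    _ = ∑ k ∈ range #S, (S.sort (· ≤ ·)).getD (#S - 1 - k) 0 / t := sum_congr rfl hpart
    _ = ∑ x ∈ S, x / t := by
        rw [sum_range_reflect (fun j => (S.sort (· ≤ ·)).getD j 0 / t)]
        exact sum_range_getD_sort S (· / t)

/-- `Σ_r |λ^{(r)}|` read off the `t`-abacus of `β(λ; N)`: on the runner `r` carrying the beads
`ξ_1 t + r > ⋯ > ξ_m t + r`, the quotient has size `Σ_k ξ_k - (0 + 1 + ⋯ + (m - 1))`. -/
def abacusWeight (t : ℕ) (lam : ℕ → ℕ) (N : ℕ) : ℤ :=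
  ∑ x ∈ betaSet lam N, ((x / t : ℕ) : ℤ) - ∑ r ∈ range t, ∑ k ∈ range (mr t lam N r), (k : ℤ)

theorem sum_psize_tQuot {t : ℕ} (ht : 0 < t) (lam : ℕ → ℕ) :
    ∑ r ∈ range t, (psize (tQuot t lam r) : ℤ) = abacusWeight t lam (t * (plen lam + 1)) := by
  rw [abacusWeight, ← sum_fiberwise_of_maps_to (s := betaSet lam (t * (plen lam + 1)))
    (g := (· % t)) (t := range t) (fun x _ => mem_range.mpr (Nat.mod_lt x ht)), ← sum_sub_distrib]
  refine sum_congr rfl fun r _ => ?_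
  rw [eq_sub_iff_add_eq]
  have h := congrArg (Nat.cast : ℕ → ℤ) (psize_tQuot_add_sum_range t lam r)
  push_cast at h ⊢
  exact h

theorem sum_mr {t : ℕ} (ht : 0 < t) {lam : ℕ → ℕ} (hlam : Antitone lam) (N : ℕ) :
    ∑ r ∈ range t, mr t lam N r = N := by
  conv_rhs => rw [← card_betaSet hlam N,
    card_eq_sum_card_fiberwise fun x _ => mem_range.mpr (Nat.mod_lt x ht)]
  rfl

theorem mr_add_self {t : ℕ} {lam : ℕ → ℕ} {N : ℕ} (hvan : ∀ i, N ≤ i → lam i = 0) {r : ℕ}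
    (hr : r < t) : mr t lam (N + t) r = mr t lam N r + 1 := by
  rw [mr, betaSet_add hvan, filter_union,
    card_union_of_disjoint (disjoint_filter_filter (disjoint_map_addRight_range _ t)), filter_map,
    card_map, mr]
  congr 1
  · congr 1
    ext x
    simp
  · refine card_eq_one.mpr ⟨r, ?_⟩
    ext x
    simp only [mem_filter, mem_range, mem_singleton]
    constructor
    · rintro ⟨hx, rfl⟩
      exact (Nat.mod_eq_of_lt hx).symm
    · rintro rfl
      exact ⟨hr, Nat.mod_eq_of_lt hr⟩

theorem abacusWeight_add_self {t : ℕ} (ht : 0 < t) {lam : ℕ → ℕ} (hlam : Antitone lam) {N : ℕ}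
    (hvan : ∀ i, N ≤ i → lam i = 0) : abacusWeight t lam (N + t) = abacusWeight t lam N := by
  have hbeads : ∑ x ∈ betaSet lam (N + t), ((x / t : ℕ) : ℤ) =
      ∑ x ∈ betaSet lam N, ((x / t : ℕ) : ℤ) + N := by
    rw [betaSet_add hvan, sum_union (disjoint_map_addRight_range _ t), sum_map,
      sum_eq_zero (s := range t) fun x hx => by rw [Nat.div_eq_of_lt (mem_range.mp hx)]; rfl]
    simp [Nat.add_div_right _ ht, sum_add_distrib, card_betaSet hlam]
  have hrunners : ∑ r ∈ range t, ∑ k ∈ range (mr t lam (N + t) r), (k : ℤ) =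
      ∑ r ∈ range t, ∑ k ∈ range (mr t lam N r), (k : ℤ) + N := by
    rw [sum_congr rfl fun r hr => by rw [mr_add_self hvan (mem_range.mp hr), sum_range_succ],
      sum_add_distrib]
    rw [← Nat.cast_sum, sum_mr ht hlam N]
  rw [abacusWeight, abacusWeight, hbeads, hrunners]
  ring

theorem abacusWeight_add_mul {t : ℕ} (ht : 0 < t) {lam : ℕ → ℕ} (hlam : Antitone lam) {N : ℕ}
    (hvan : ∀ i, N ≤ i → lam i = 0) (k : ℕ) :
    abacusWeight t lam (N + k * t) = abacusWeight t lam N := by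
  induction k with
  | zero => simp
  | succ k ih =>
    rw [add_one_mul, ← add_assoc, abacusWeight_add_self ht hlam fun i hi => hvan i (by omega), ih]

theorem abacusWeight_sub_of_mr_eq {t N : ℕ} {lam mu : ℕ → ℕ}
    (hmr : ∀ r, mr t lam N r = mr t mu N r) :
    abacusWeight t lam N - abacusWeight t mu N =
      ∑ x ∈ betaSet lam N, ((x / t : ℕ) : ℤ) - ∑ x ∈ betaSet mu N, ((x / t : ℕ) : ℤ) := by
  simp only [abacusWeight, hmr]
  ring

theorem sum_psize_tQuot_sub_eq {t : ℕ} (ht : 0 < t) {lam mu : ℕ → ℕ} (hlam : IsPartition lam)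
    (hmu : IsPartition mu) (hsub : SubP mu lam)
    (hmr : ∀ r, mr t lam (t * (plen lam + 1)) r = mr t mu (t * (plen lam + 1)) r) :
    (∑ r ∈ range t, (psize (tQuot t lam r) : ℤ)) - ∑ r ∈ range t, (psize (tQuot t mu r) : ℤ) =
      ∑ i, ((beta lam (t * (plen lam + 1)) i / t : ℕ) : ℤ) -
        ∑ j, ((beta mu (t * (plen lam + 1)) j / t : ℕ) : ℤ) := by
  obtain ⟨d, hd⟩ := Nat.exists_eq_add_of_le (plen_le_of_subP hlam hsub)
  have hN : t * (plen lam + 1) = t * (plen mu + 1) + d * t := by rw [hd]; ring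
  rw [sum_psize_tQuot ht, sum_psize_tQuot ht (lam := mu), ← abacusWeight_add_mul ht hmu.1
      (fun i hi => hmu.eq_zero_of_plen_le (by nlinarith)) d, ← hN,
    abacusWeight_sub_of_mr_eq hmr, sum_betaSet hlam.1, sum_betaSet hmu.1]

theorem msign_eq_neg_one_pow {R : Type*} [Ring R] {z : ℤ} {n : ℕ} (h : Even (z + n)) :
    (msign z : R) = (-1) ^ n := by
  have hzn : Even z ↔ Even n := by rw [← Int.even_coe_nat]; exact Int.even_add.mp h
  unfold msign
  split_ifs with hz
  · simp [(hzn.mp hz).neg_one_pow]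
  · simp [(Nat.not_even_iff_odd.mp (hzn.not.mp hz)).neg_one_pow]

/-- **Proposition (commutation of `ω` and `φ_t` on skew Schur functions).**
`ω φ_t s_{λ/μ} = (-1)^{(t-1)(|λ^{(0)}|+⋯+|λ^{(t-1)}| - |μ^{(0)}|-⋯-|μ^{(t-1)}|)} φ_t ω s_{λ/μ}`. -/
theorem omega_phi_skew (t : ℕ) (ht : 2 ≤ t) (lam mu : ℕ → ℕ)
    (hlam : IsPartition lam) (hmu : IsPartition mu) (hsub : SubP mu lam) :
    omegaSym (phi t (sSkew lam mu)) =
      (msign (((t : ℤ) - 1) *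
        ((∑ r ∈ Finset.range t, (psize (tQuot t lam r) : ℤ)) -
          ∑ r ∈ Finset.range t, (psize (tQuot t mu r) : ℤ))) : SymF) *
        phi t (omegaSym (sSkew lam mu)) := by
  have ht0 : 0 < t := by omega
  set N := t * (plen lam + 1)
  have hN : plen lam ≤ N := by simp only [N]; nlinarith
  rw [omegaSym_phi ht0, phi_omegaSym_sSkew hlam hmu hsub hN, signTwist_det_phi_omegaSym ht0]
  set D := (Matrix.of fun i j : Fin N =>
    phi t (omegaSym (hh ((beta lam N i : ℤ) - beta mu N j)))).det
  rcases eq_or_ne D 0 with h0 | h0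
  · rw [h0, mul_zero, mul_zero]
  have hmr : ∀ r, mr t lam N r = mr t mu N r := fun r => by
    rw [mr_eq_card hlam.1, mr_eq_card hmu.1, card_filter_mod_eq_of_det_ne_zero ht0 _ _ h0]
  rw [sum_psize_tQuot_sub_eq ht0 hlam hmu hsub hmr, msign_eq_neg_one_pow]
  refine ⟨((t - 1 : ℕ) : ℤ) * ∑ i, ((beta lam N i / t : ℕ) : ℤ), ?_⟩
  push_cast [Nat.cast_sub (by omega : 1 ≤ t)]
  ring

end
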